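/- Every semi-connected Condorcet domain D ⊆ L([n]) is a peak-pit domain: for every triple i<j<k, either in the restriction to {i,j,k} of every member of D the alternative j is never the worst (peak condition), or in every such restriction j is never the best (pit condition). -/

import Mathlib

/-- The set of linear orders on `{1,…,n}`, encoded as words (lists) listing the
alternatives from worst to best; such a word is a permutation of `1,2,…,n`. -/
def LinWords (n : ℕ) : Set (List ℕ) := {l | l.Perm (List.range' 1 n)}

/-- Linear orders on a finite ground set `X ⊆ ℕ`, encoded as words. -/
def LinWordsOn (X : Finset ℕ) : Set (List ℕ) := {l | l.Perm (X.sort (· ≤ ·))}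

/-- `ltIn σ i j` : `i` occurs before (i.e. is worse than) `j` in the word `σ`;
this is the relation `i <_σ j`. -/
def ltIn (σ : List ℕ) (i j : ℕ) : Prop := σ.idxOf i < σ.idxOf j

instance (σ : List ℕ) (i j : ℕ) : Decidable (ltIn σ i j) :=
  inferInstanceAs (Decidable (σ.idxOf i < σ.idxOf j))

/-- Three orders in `D` whose restrictions to `{i,j,k}` are exactly the three
cyclic patterns `i<j<k`, `j<k<i`, `k<i<j`. -/
def CyclicTriple (D : Set (List ℕ)) (i j k : ℕ) : Prop :=
  ∃ σ₁ ∈ D, ∃ σ₂ ∈ D, ∃ σ₃ ∈ D,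
    (ltIn σ₁ i j ∧ ltIn σ₁ j k) ∧ (ltIn σ₂ j k ∧ ltIn σ₂ k i) ∧ (ltIn σ₃ k i ∧ ltIn σ₃ i j)

/-- `D` is cyclic: some three distinct alternatives and three orders of `D`
restrict to `{i,j,k}` as `{ijk, jki, kij}` or as `{kji, jik, ikj}`. -/
def IsCyclicDom (D : Set (List ℕ)) : Prop :=
  ∃ i j k : ℕ, i ≠ j ∧ j ≠ k ∧ i ≠ k ∧ (CyclicTriple D i j k ∨ CyclicTriple D k j i)

/-- On the triple `i<j<k`, in every order of `D` the alternative `j` is never the worst. -/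
def PeakCond (D : Set (List ℕ)) (i j k : ℕ) : Prop :=
  ∀ σ ∈ D, ¬ (ltIn σ j i ∧ ltIn σ j k)

/-- On the triple `i<j<k`, in every order of `D` the alternative `j` is never the best. -/
def PitCond (D : Set (List ℕ)) (i j k : ℕ) : Prop :=
  ∀ σ ∈ D, ¬ (ltIn σ i j ∧ ltIn σ k j)

/-- `D` is a peak-pit domain: every triple `i<j<k` in `[n]` satisfies the peak
condition or the pit condition. -/
def IsPeakPit (n : ℕ) (D : Set (List ℕ)) : Prop :=
  ∀ i j k : ℕ, 1 ≤ i → i < j → j < k → k ≤ n → (PeakCond D i j k ∨ PitCond D i j k)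

/-- The four symbols a casting can assign to a triple. -/
inductive Symb | peak | pit | right | left

/-- Membership of (the restriction of) `σ` in the four-element domain `D₃(s)` on
the triple `i<j<k`: for `∩`, `j` is not worst; for `∪`, `j` is not best; for `→`,
`k` is not middle; for `←`, `i` is not middle. -/
def TripleCond : Symb → List ℕ → ℕ → ℕ → ℕ → Prop
  | Symb.peak, σ, i, j, k => ¬ (ltIn σ j i ∧ ltIn σ j k)
  | Symb.pit,  σ, i, j, k => ¬ (ltIn σ i j ∧ ltIn σ k j)
  | Symb.right, σ, i, j, k => ¬ ((ltIn σ i k ∧ ltIn σ k j) ∨ (ltIn σ j k ∧ ltIn σ k i))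
  | Symb.left,  σ, i, j, k => ¬ ((ltIn σ j i ∧ ltIn σ i k) ∨ (ltIn σ k i ∧ ltIn σ i j))

/-- The domain `D(c)` of a casting `c`: all linear orders on `[n]` whose restriction
to every triple `i<j<k` lies in `D₃(c i j k)`. -/
def CastDomain (n : ℕ) (c : ℕ → ℕ → ℕ → Symb) : Set (List ℕ) :=
  {σ | σ ∈ LinWords n ∧ ∀ i j k : ℕ, 1 ≤ i → i < j → j < k → k ≤ n → TripleCond (c i j k) σ i j k}

/-- The set of inversions of a word `σ`: pairs `(i,j)` of alternatives of `σ`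
with `i < j` as integers and `j <_σ i`. -/
def InvPairs (σ : List ℕ) : Set (ℕ × ℕ) :=
  {p | p.1 ∈ σ ∧ p.2 ∈ σ ∧ p.1 < p.2 ∧ ltIn σ p.2 p.1}

/-- `τ` covers `σ` in the weak Bruhat order: `InvPairs τ` is `InvPairs σ` plus exactly one pair. -/
def Covers (τ σ : List ℕ) : Prop :=
  ∃ p : ℕ × ℕ, p ∉ InvPairs σ ∧ InvPairs τ = insert p (InvPairs σ)

/-- Adjacency in the Bruhat graph. -/
def BruhatAdj (σ τ : List ℕ) : Prop := Covers τ σ ∨ Covers σ τ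

/-- A path in the Bruhat graph from `σ` to `τ` all of whose vertices lie in `D`. -/
def PathIn (D : Set (List ℕ)) (σ τ : List ℕ) : Prop :=
  ∃ (m : ℕ) (f : ℕ → List ℕ), f 0 = σ ∧ f m = τ ∧
    (∀ t ≤ m, f t ∈ D) ∧ ∀ t < m, BruhatAdj (f t) (f (t + 1))

/-- `D` is semi-connected (ground set `[n]`): it contains the increasing order `α`
and the decreasing order `ω` and a Bruhat path from `α` to `ω` inside `D`. -/
def SemiConnected (n : ℕ) (D : Set (List ℕ)) : Prop :=
  List.range' 1 n ∈ D ∧ (List.range' 1 n).reverse ∈ D ∧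
    PathIn D (List.range' 1 n) (List.range' 1 n).reverse

/-- `D` is semi-connected on the ground set `X`. -/
def SemiConnectedOn (X : Finset ℕ) (D : Set (List ℕ)) : Prop :=
  X.sort (· ≤ ·) ∈ D ∧ (X.sort (· ≤ ·)).reverse ∈ D ∧
    PathIn D (X.sort (· ≤ ·)) (X.sort (· ≤ ·)).reverse

/-- `A` is an ideal of the order `σ`: a downward-closed (w.r.t. `<_σ`) set of
alternatives of `σ`, i.e. an initial segment of the word `σ`. -/
def IsIdeal (σ : List ℕ) (A : Set ℕ) : Prop :=
  (∀ x ∈ A, x ∈ σ) ∧ ∀ x ∈ A, ∀ y ∈ σ, ltIn σ y x → y ∈ A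

/-- The set system of all ideals of `σ`. -/
def IdSet (σ : List ℕ) : Set (Set ℕ) := {A | IsIdeal σ A}

/-- The convex hull of a set of naturals: the minimal integer interval containing it. -/
def hull (S : Set ℕ) : Set ℕ := {x | ∃ a ∈ S, ∃ b ∈ S, a ≤ x ∧ x ≤ b}

/-- `A` and `B` are separated: the convex hulls of `A \ B` and `B \ A` are disjoint. -/
def Separated (A B : Set ℕ) : Prop := Disjoint (hull (A \ B)) (hull (B \ A))

/-- A separated set system: any two members are separated. -/
def SepSystem (𝒳 : Set (Set ℕ)) : Prop := ∀ A ∈ 𝒳, ∀ B ∈ 𝒳, Separated A B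

/-- The concatenation `σ * τ` of a word on `[n]` with a word on `[n']`, the latter
shifted by `n`. -/
def concatWord (n : ℕ) (σ τ : List ℕ) : List ℕ := σ ++ τ.map (· + n)

/-- The concatenation `{σ * τ : σ ∈ D, τ ∈ D'}` of two domains. -/
def ConcatDomain (n : ℕ) (D D' : Set (List ℕ)) : Set (List ℕ) :=
  {l | ∃ σ ∈ D, ∃ τ ∈ D', l = concatWord n σ τ}

/-- The simple-majority relation `i sm(ν) j` for an opinion `ν` on the finite domain `D`. -/
def SM (D : Finset (List ℕ)) (ν : List ℕ → ℕ) (i j : ℕ) : Prop :=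
  (∑ σ ∈ D, if ltIn σ j i then ν σ else 0) > (∑ σ ∈ D, if ltIn σ i j then ν σ else 0)

/-- Fishburn's domain (the alternating scheme): for each triple `i<j<k`, if `j` is
even then `j` is not the worst of `{i,j,k}`, and if `j` is odd then `j` is not the best. -/
def Fishburn (n : ℕ) : Set (List ℕ) :=
  {σ | σ ∈ LinWords n ∧ ∀ i j k : ℕ, 1 ≤ i → i < j → j < k → k ≤ n →
    (Even j → ¬ (ltIn σ j i ∧ ltIn σ j k)) ∧ (Odd j → ¬ (ltIn σ i j ∧ ltIn σ k j))}

/-- `γ n`: the maximum cardinality of a peak-pit domain in `L([n])`. -/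
noncomputable def gamma (n : ℕ) : ℕ :=
  sSup {m | ∃ D : Set (List ℕ), D ⊆ LinWords n ∧ IsPeakPit n D ∧ D.ncard = m}


/-!
Fix `i < j < k`. Along the Bruhat path from `α` to `ω` inside `D`, the pair `(i, k)` is reversed
at a single step `σ → τ`, and that step changes no other pair. Hence on `{i, j, k}` either
`σ = ikj, τ = kij` or `σ = jik, τ = jki`. Together with `α = ijk` and `ω = kji`, acyclicity then
excludes `jik` and `jki` in the first case (the peak condition) and `ikj` and `kij` in the second
(the pit condition).
-/

/-- `ltChain σ a b c`: the restriction of `σ` to `{a, b, c}` is `a < b < c`. -/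
abbrev ltChain (σ : List ℕ) (a b c : ℕ) : Prop := ltIn σ a b ∧ ltIn σ b c

section ltIn

variable {σ : List ℕ} {a b c : ℕ}

lemma ltIn.ne (h : ltIn σ a b) : a ≠ b := by
  rintro rfl
  exact lt_irrefl _ h

lemma ltIn.asymm (h : ltIn σ a b) : ¬ ltIn σ b a :=
  Nat.lt_asymm h

lemma ltIn.trans (h₁ : ltIn σ a b) (h₂ : ltIn σ b c) : ltIn σ a c :=
  Nat.lt_trans h₁ h₂

lemma ltIn_or_ltIn (ha : a ∈ σ) (hab : a ≠ b) : ltIn σ a b ∨ ltIn σ b a :=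
  Nat.lt_or_gt_of_ne (mt (List.idxOf_inj ha).1 hab)

lemma List.Pairwise.rel_of_ltIn {R : ℕ → ℕ → Prop} (hσ : σ.Pairwise R) (hb : b ∈ σ)
    (h : ltIn σ a b) : R a b := by
  have hb' : σ.idxOf b < σ.length := List.idxOf_lt_length_iff.2 hb
  have ha' : σ.idxOf a < σ.length := Nat.lt_trans h hb'
  simpa only [List.getElem_idxOf] using List.pairwise_iff_getElem.1 hσ _ _ ha' hb' h

end ltIn

lemma mem_of_mem_linWords {n a : ℕ} {σ : List ℕ} (hσ : σ ∈ LinWords n) (ha : 1 ≤ a)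
    (ha' : a ≤ n) : a ∈ σ :=
  hσ.mem_iff.2 (List.mem_range'_1.2 ⟨ha, by omega⟩)

section range

variable {n a b : ℕ}

lemma ltIn_range' (ha : 1 ≤ a) (hab : a < b) (hb : b ≤ n) : ltIn (List.range' 1 n) a b := by
  have hmem : ∀ x, 1 ≤ x → x ≤ n → x ∈ List.range' 1 n :=
    fun x hx hx' => List.mem_range'_1.2 ⟨hx, by omega⟩
  refine (ltIn_or_ltIn (hmem a ha (by omega)) hab.ne).resolve_right fun h => ?_
  exact absurd ((List.pairwise_lt_range' (s := 1) (n := n)).rel_of_ltIn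
    (hmem a ha (by omega)) h) (by omega)

lemma ltIn_reverse_range' (ha : 1 ≤ a) (hab : a < b) (hb : b ≤ n) :
    ltIn (List.range' 1 n).reverse b a := by
  have hmem : ∀ x, 1 ≤ x → x ≤ n → x ∈ (List.range' 1 n).reverse :=
    fun x hx hx' => List.mem_reverse.2 (List.mem_range'_1.2 ⟨hx, by omega⟩)
  refine (ltIn_or_ltIn (hmem b (by omega) hb) hab.ne').resolve_right fun h => ?_
  exact absurd ((List.pairwise_reverse.2 (List.pairwise_lt_range' (s := 1) (n := n))).rel_of_ltIn
    (hmem b (by omega) hb) h) (by omega)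

end range

lemma mem_invPairs_iff {σ : List ℕ} {a b : ℕ} (ha : a ∈ σ) (hb : b ∈ σ) (hab : a < b) :
    (a, b) ∈ InvPairs σ ↔ ltIn σ b a :=
  ⟨fun h => h.2.2.2, fun h => ⟨ha, hb, hab, h⟩⟩

lemma Covers.symmDiff_invPairs {σ τ : List ℕ} (h : Covers τ σ) :
    ∃ p, symmDiff (InvPairs σ) (InvPairs τ) = {p} := by
  obtain ⟨p, hp, heq⟩ := h
  refine ⟨p, Set.ext fun q => ?_⟩
  rw [heq, Set.mem_symmDiff, Set.mem_insert_iff, Set.mem_singleton_iff]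
  by_cases hq : q = p
  · subst hq; tauto
  · tauto

lemma BruhatAdj.eq_of_mem_symmDiff {σ τ : List ℕ} (h : BruhatAdj σ τ) {p q : ℕ × ℕ}
    (hp : p ∈ symmDiff (InvPairs σ) (InvPairs τ)) (hq : q ∈ symmDiff (InvPairs σ) (InvPairs τ)) :
    p = q := by
  obtain ⟨r, hr⟩ : ∃ r, symmDiff (InvPairs σ) (InvPairs τ) = {r} := by
    rcases h with h | h
    · exact h.symmDiff_invPairs
    · simpa only [symmDiff_comm] using h.symmDiff_invPairs
  rw [hr] at hp hq
  exact hp.trans hq.symm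

lemma BruhatAdj.ltIn_iff_of_ltIn_of_ltIn {n : ℕ} {σ τ : List ℕ} (h : BruhatAdj σ τ)
    (hσ : σ ∈ LinWords n) (hτ : τ ∈ LinWords n) {a b c d : ℕ} (ha : 1 ≤ a) (hab : a < b)
    (hb : b ≤ n) (hc : 1 ≤ c) (hcd : c < d) (hd : d ≤ n) (hne : (a, b) ≠ (c, d))
    (hσab : ltIn σ a b) (hτba : ltIn τ b a) : ltIn σ d c ↔ ltIn τ d c := by
  have hflip : (a, b) ∈ symmDiff (InvPairs σ) (InvPairs τ) :=
    Or.inr ⟨(mem_invPairs_iff (mem_of_mem_linWords hτ ha (by omega))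
      (mem_of_mem_linWords hτ (by omega) hb) hab).2 hτba, fun h => hσab.asymm h.2.2.2⟩
  have hkeep : (c, d) ∉ symmDiff (InvPairs σ) (InvPairs τ) :=
    fun h' => hne (h.eq_of_mem_symmDiff hflip h')
  have hcd_inv : ∀ ρ ∈ LinWords n, (c, d) ∈ InvPairs ρ ↔ ltIn ρ d c := fun ρ hρ =>
    mem_invPairs_iff (mem_of_mem_linWords hρ hc (by omega))
      (mem_of_mem_linWords hρ (by omega) hd) hcd
  rw [Set.mem_symmDiff, hcd_inv σ hσ, hcd_inv τ hτ] at hkeep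
  tauto

lemma ltChain_of_bruhatAdj {n : ℕ} {σ τ : List ℕ} (h : BruhatAdj σ τ) (hσ : σ ∈ LinWords n)
    (hτ : τ ∈ LinWords n) {i j k : ℕ} (hi : 1 ≤ i) (hij : i < j) (hjk : j < k) (hk : k ≤ n)
    (hσik : ltIn σ i k) (hτki : ltIn τ k i) :
    (ltChain σ i k j ∧ ltChain τ k i j) ∨ (ltChain σ j i k ∧ ltChain τ j k i) := by
  have hji : ltIn σ j i ↔ ltIn τ j i := h.ltIn_iff_of_ltIn_of_ltIn hσ hτ hi (hij.trans hjk) hk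
    hi hij (by omega) (by simp only [ne_eq, Prod.mk.injEq]; omega) hσik hτki
  have hkj : ltIn σ k j ↔ ltIn τ k j := h.ltIn_iff_of_ltIn_of_ltIn hσ hτ hi (hij.trans hjk) hk
    (by omega) hjk hk (by simp only [ne_eq, Prod.mk.injEq]; omega) hσik hτki
  rcases ltIn_or_ltIn (mem_of_mem_linWords hσ (by omega) (by omega)) hij.ne' with hσji | hσij
  · have hτjk : ltIn τ j k := (ltIn_or_ltIn (mem_of_mem_linWords hτ (by omega) (by omega))
      hjk.ne).resolve_right fun hτkj => (hσji.trans hσik).asymm (hkj.2 hτkj)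
    exact .inr ⟨⟨hσji, hσik⟩, hτjk, hτki⟩
  · have hτij : ltIn τ i j := (ltIn_or_ltIn (mem_of_mem_linWords hτ hi (by omega))
      hij.ne).resolve_right fun hτji => hσij.asymm (hji.2 hτji)
    exact .inl ⟨⟨hσik, hkj.2 (hτki.trans hτij)⟩, hτki, hτij⟩

lemma Nat.exists_lt_and_not_succ_of_not {P : ℕ → Prop} (h₀ : P 0) {m : ℕ} (hm : ¬ P m) :
    ∃ t < m, P t ∧ ¬ P (t + 1) := by
  induction m with
  | zero => exact absurd h₀ hm
  | succ m ih =>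
    by_cases hPm : P m
    · exact ⟨m, m.lt_succ_self, hPm, hm⟩
    · obtain ⟨t, ht, hPt⟩ := ih hPm
      exact ⟨t, ht.trans m.lt_succ_self, hPt⟩

lemma SemiConnected.exists_ltChain {n : ℕ} {D : Set (List ℕ)} (hsc : SemiConnected n D)
    (hD : D ⊆ LinWords n) {i j k : ℕ} (hi : 1 ≤ i) (hij : i < j) (hjk : j < k) (hk : k ≤ n) :
    ∃ σ ∈ D, ∃ τ ∈ D,
      (ltChain σ i k j ∧ ltChain τ k i j) ∨ (ltChain σ j i k ∧ ltChain τ j k i) := by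
  obtain ⟨-, -, m, f, hf₀, hfm, hfD, hadj⟩ := hsc
  obtain ⟨t, htm, hik, hnik⟩ := Nat.exists_lt_and_not_succ_of_not
    (P := fun t => ltIn (f t) i k) (m := m)
    (by simpa only [hf₀] using ltIn_range' hi (hij.trans hjk) hk)
    (by simpa only [hfm] using (ltIn_reverse_range' hi (hij.trans hjk) hk).asymm)
  have hσ := hfD t htm.le
  have hτ := hfD (t + 1) htm
  have hki : ltIn (f (t + 1)) k i :=
    (ltIn_or_ltIn (mem_of_mem_linWords (hD hτ) hi (by omega)) (hij.trans hjk).ne).resolve_left hnik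
  exact ⟨f t, hσ, f (t + 1), hτ,
    ltChain_of_bruhatAdj (hadj t htm) (hD hσ) (hD hτ) hi hij hjk hk hik hki⟩

lemma not_ltChain_of_not_isCyclicDom {D : Set (List ℕ)} (hCD : ¬ IsCyclicDom D) {a b c : ℕ}
    (h₁ : ∃ σ ∈ D, ltChain σ a b c) (h₂ : ∃ σ ∈ D, ltChain σ b c a) :
    ∀ σ ∈ D, ¬ ltChain σ c a b := by
  rintro σ hσ h₃
  obtain ⟨σ₁, hσ₁, h₁⟩ := h₁
  obtain ⟨σ₂, hσ₂, h₂⟩ := h₂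
  exact hCD ⟨a, b, c, h₁.1.ne, h₁.2.ne, (h₁.1.trans h₁.2).ne,
    .inl ⟨σ₁, hσ₁, σ₂, hσ₂, σ, hσ, h₁, h₂, h₃⟩⟩

section PeakPit

variable {D : Set (List ℕ)} {i j k : ℕ}

lemma peakCond_of_not_isCyclicDom (hCD : ¬ IsCyclicDom D)
    (htot : ∀ σ ∈ D, ltIn σ i k ∨ ltIn σ k i)
    (hijk : ∃ σ ∈ D, ltChain σ i j k) (hkji : ∃ σ ∈ D, ltChain σ k j i)
    (hikj : ∃ σ ∈ D, ltChain σ i k j) (hkij : ∃ σ ∈ D, ltChain σ k i j) :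
    PeakCond D i j k := by
  rintro σ hσ ⟨hji, hjk⟩
  rcases htot σ hσ with hik | hki
  · exact not_ltChain_of_not_isCyclicDom hCD hikj hkji σ hσ ⟨hji, hik⟩
  · exact not_ltChain_of_not_isCyclicDom hCD hkij hijk σ hσ ⟨hjk, hki⟩

lemma pitCond_of_not_isCyclicDom (hCD : ¬ IsCyclicDom D)
    (htot : ∀ σ ∈ D, ltIn σ i k ∨ ltIn σ k i)
    (hijk : ∃ σ ∈ D, ltChain σ i j k) (hkji : ∃ σ ∈ D, ltChain σ k j i)
    (hjik : ∃ σ ∈ D, ltChain σ j i k) (hjki : ∃ σ ∈ D, ltChain σ j k i) :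
    PitCond D i j k := by
  rintro σ hσ ⟨hij, hkj⟩
  rcases htot σ hσ with hik | hki
  · exact not_ltChain_of_not_isCyclicDom hCD hkji hjik σ hσ ⟨hik, hkj⟩
  · exact not_ltChain_of_not_isCyclicDom hCD hijk hjki σ hσ ⟨hki, hij⟩

end PeakPit

/-- every semi-connected Condorcet domain is a peak-pit domain. -/
theorem statement_5 (n : ℕ) (D : Set (List ℕ)) (hD : D ⊆ LinWords n)
    (hCD : ¬ IsCyclicDom D) (hsc : SemiConnected n D) :
    IsPeakPit n D := by
  intro i j k hi hij hjk hkn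
  have htot : ∀ σ ∈ D, ltIn σ i k ∨ ltIn σ k i := fun σ hσ =>
    ltIn_or_ltIn (mem_of_mem_linWords (hD hσ) hi (by omega)) (hij.trans hjk).ne
  have hijk : ∃ σ ∈ D, ltChain σ i j k :=
    ⟨_, hsc.1, ltIn_range' hi hij (by omega), ltIn_range' (by omega) hjk hkn⟩
  have hkji : ∃ σ ∈ D, ltChain σ k j i :=
    ⟨_, hsc.2.1, ltIn_reverse_range' (by omega) hjk hkn, ltIn_reverse_range' hi hij (by omega)⟩
  obtain ⟨σ, hσ, τ, hτ, ⟨hikj, hkij⟩ | ⟨hjik, hjki⟩⟩ := hsc.exists_ltChain hD hi hij hjk hkn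
  · exact .inl (peakCond_of_not_isCyclicDom hCD htot hijk hkji ⟨σ, hσ, hikj⟩ ⟨τ, hτ, hkij⟩)
  · exact .inr (pitCond_of_not_isCyclicDom hCD htot hijk hkji ⟨σ, hσ, hjik⟩ ⟨τ, hτ, hjki⟩)
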